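/- arXiv:1910.11154 — 2 statements merged into one kernel-verified Lean document; each statement's English description precedes it below -/
import Mathlib

section
/- Suppose a vendor k moves to a point in the interior of a gap (x_l, x_{l+1}) between two consecutive other vendors (with x_l < x_{l+1}, l ≠ k-1, k). Then vendor k's new profit equals half the length of that gap: f_k(x_k → (x_l, x_{l+1})) = |I_l|/2. -/
noncomputable section

/-- Shortest arc distance on the circle of circumference 1. -/
def circleDist (x y : ℝ) : ℝ := min |x - y + 1| (min |x - y| |x - y - 1|)

open scoped Classical

/-- The set of vendors nearest to the customer at `y`. -/
def nearest {n : ℕ} (ξ : Fin n → ℝ) (y : ℝ) : Finset (Fin n) :=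
  Finset.univ.filter fun j => ∀ i, circleDist (ξ j) y ≤ circleDist (ξ i) y

/-- Density of demand of customer `y` going to vendor `k`. -/
def rho {n : ℕ} (ξ : Fin n → ℝ) (k : Fin n) (y : ℝ) : ℝ :=
  if k ∈ nearest ξ y then (1 : ℝ) / (nearest ξ y).card else 0

/-- Profit of vendor `k`. -/
def profit {n : ℕ} (k : Fin n) (ξ : Fin n → ℝ) : ℝ :=
  ∫ y in (0:ℝ)..1, rho ξ k y

/-- Equilibrium: no vendor can strictly increase profit by unilateral relocation. -/
def IsEquilibrium {n : ℕ} (x : Fin n → ℝ) : Prop :=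
  ∀ k : Fin n, ∀ x' ∈ Set.Icc (0:ℝ) 1,
    profit k (Function.update x k x') ≤ profit k x

/-- Length of the cyclic gap `I_j = [x_j, x_{j+1}]` (for sorted `x` with `x 0 = 0`). -/
def gap {n : ℕ} [NeZero n] (x : Fin n → ℝ) (j : Fin n) : ℝ :=
  (if (j : ℕ) + 1 = n then 1 else 0) + x (j + 1) - x j

/-- The right endpoint of gap `I_j`, unwrapped to the real line. -/
def nextVal {n : ℕ} [NeZero n] (x : Fin n → ℝ) (j : Fin n) : ℝ :=
  (if (j : ℕ) + 1 = n then 1 else 0) + x (j + 1)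

/-- Maximum cyclic gap length `|Ī|`. -/
def maxGap {n : ℕ} [NeZero n] (x : Fin n → ℝ) : ℝ := ⨆ j, gap x j

/-!
All vendors other than `k` lie outside the open gap `(a, b) = (x_l, x_{l+1})`, and for points of
`[0, 1]` the circle distance is `min |t| (1 - |t|)` with `t` their difference. A customer strictly
between the midpoints `(a + x') / 2` and `(x' + b) / 2` is then strictly closer to `x'` than to any
other vendor, while every other customer is strictly closer to `a` or to `b` (the latter possibly
around the circle) than to `x'`. So vendor `k` serves exactly the interval between the midpoints,
whose length is `(b - a) / 2`.
-/

open Set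

lemma circleDist_eq_min_abs {u v : ℝ} (h : |u - v| ≤ 1) :
    circleDist u v = min |u - v| (1 - |u - v|) := by
  unfold circleDist
  rcases abs_cases (u - v) with ⟨e, hs⟩ | ⟨e, hs⟩ <;> rw [e] at h ⊢ <;>
    rw [abs_of_nonneg (by linarith : (0:ℝ) ≤ u - v + 1),
      abs_of_nonpos (by linarith : u - v - 1 ≤ 0)] <;> grind

lemma circleDist_zero_eq_circleDist_one {y : ℝ} (hy : y ∈ Icc (0 : ℝ) 1) :
    circleDist 0 y = circleDist 1 y := by
  obtain ⟨hy0, hy1⟩ := hy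
  rw [circleDist_eq_min_abs (by rw [abs_le]; constructor <;> linarith),
    circleDist_eq_min_abs (by rw [abs_le]; constructor <;> linarith),
    zero_sub, abs_neg, abs_of_nonneg hy0, abs_of_nonneg (by linarith : 0 ≤ 1 - y), sub_sub_cancel,
    min_comm]

section Gap

variable {a b c y : ℝ}

lemma circleDist_lt_of_mem_Ioo_midpoints (ha : 0 ≤ a) (hac : a < c) (hcb : c < b) (hb : b ≤ 1)
    (hy : y ∈ Ioo ((a + c) / 2) ((c + b) / 2)) {z : ℝ} (hz : z ∈ Icc 0 1) (hzab : z ∉ Ioo a b) :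
    circleDist c y < circleDist z y := by
  obtain ⟨hy₁, hy₂⟩ := hy
  obtain ⟨hz₀, hz₁⟩ := hz
  have hzab : z ≤ a ∨ b ≤ z := by
    by_contra! h
    exact hzab ⟨h.1, h.2⟩
  rw [circleDist_eq_min_abs (by rw [abs_le]; constructor <;> linarith),
    circleDist_eq_min_abs (by rw [abs_le]; constructor <;> linarith)]
  grind

lemma circleDist_left_lt_or_right_lt (ha : 0 ≤ a) (hac : a < c) (hcb : c < b) (hb : b ≤ 1)
    (hy : y ∈ Icc 0 1) (hyc : y ∉ Icc ((a + c) / 2) ((c + b) / 2)) :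
    circleDist a y < circleDist c y ∨ circleDist b y < circleDist c y := by
  obtain ⟨hy₀, hy₁⟩ := hy
  have hyc : y < (a + c) / 2 ∨ (c + b) / 2 < y := by
    by_contra! h
    exact hyc ⟨h.1, h.2⟩
  rw [circleDist_eq_min_abs (by rw [abs_le]; constructor <;> linarith),
    circleDist_eq_min_abs (by rw [abs_le]; constructor <;> linarith),
    circleDist_eq_min_abs (by rw [abs_le]; constructor <;> linarith)]
  grind

end Gap

section Vendors

variable {n : ℕ}

lemma Fin.add_one_eq_zero_of_val_add_one_eq [NeZero n] {l : Fin n} (h : (l : ℕ) + 1 = n) :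
    l + 1 = 0 := by
  rw [Fin.ext_iff, Fin.val_add, Fin.val_one', Nat.add_mod_mod, h, Nat.mod_self, Fin.val_zero]

variable [NeZero n] {x : Fin n → ℝ}

lemma nextVal_le_one (hx0 : x 0 = 0) (hx1 : ∀ j, x j ≤ 1) (l : Fin n) : nextVal x l ≤ 1 := by
  unfold nextVal
  split_ifs with h
  · simp [Fin.add_one_eq_zero_of_val_add_one_eq h, hx0]
  · simpa using hx1 (l + 1)

lemma le_or_nextVal_le (hmono : Monotone x) (l j : Fin n) : x j ≤ x l ∨ nextVal x l ≤ x j := by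
  unfold nextVal
  split_ifs with h
  · exact Or.inl (hmono (Fin.le_def.2 (by omega)))
  · rcases le_or_gt j l with hjl | hlj
    · exact Or.inl (hmono hjl)
    · rw [zero_add]
      exact Or.inr (hmono (Fin.le_def.2 (by rw [Fin.val_add_one_of_lt' (by omega)]; exact hlj)))

lemma circleDist_add_one_eq_nextVal (hx0 : x 0 = 0) (l : Fin n) {y : ℝ} (hy : y ∈ Icc 0 1) :
    circleDist (x (l + 1)) y = circleDist (nextVal x l) y := by
  unfold nextVal
  split_ifs with h
  · rw [Fin.add_one_eq_zero_of_val_add_one_eq h, hx0, add_zero]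
    exact circleDist_zero_eq_circleDist_one hy
  · rw [zero_add]

end Vendors

section Profit

variable {n : ℕ} {ξ : Fin n → ℝ} {k : Fin n} {y : ℝ}

lemma rho_eq_one_of_forall_lt (h : ∀ i ≠ k, circleDist (ξ k) y < circleDist (ξ i) y) :
    rho ξ k y = 1 := by
  have hnear : nearest ξ y = {k} := by
    ext i
    simp only [nearest, Finset.mem_filter, Finset.mem_univ, true_and, Finset.mem_singleton]
    constructor
    · intro hi
      by_contra hik
      exact (h i hik).not_ge (hi k)
    · rintro rfl j
      by_cases hj : j = i
      · rw [hj]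
      · exact (h j hj).le
  simp [rho, hnear]

lemma rho_eq_zero_of_lt {i : Fin n} (h : circleDist (ξ i) y < circleDist (ξ k) y) :
    rho ξ k y = 0 := by
  rw [rho, if_neg]
  simp only [nearest, Finset.mem_filter, Finset.mem_univ, true_and, not_forall, not_le]
  exact ⟨i, h⟩

lemma profit_eq_of_rho_eq_indicator {c d : ℝ} (hc : 0 ≤ c) (hcd : c ≤ d) (hd : d ≤ 1)
    (h₁ : ∀ y ∈ Ioo c d, rho ξ k y = 1) (h₀ : ∀ y ∈ Icc 0 1, y ∉ Icc c d → rho ξ k y = 0) :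
    profit k ξ = d - c := by
  have hae : ∀ᵐ y, y ∈ uIoc (0 : ℝ) 1 → rho ξ k y = (Ioo c d).indicator 1 y := by
    have hnull : MeasureTheory.volume ({c, d} : Set ℝ) = 0 := (toFinite _).measure_zero _
    filter_upwards [MeasureTheory.measure_eq_zero_iff_ae_notMem.mp hnull] with y hcd hy
    rw [uIoc_of_le zero_le_one] at hy
    by_cases hyI : y ∈ Ioo c d
    · rw [indicator_of_mem hyI, h₁ y hyI, Pi.one_apply]
    · rw [indicator_of_notMem hyI, h₀ y (Ioc_subset_Icc_self hy)]
      rintro ⟨hcy, hyd⟩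
      simp only [mem_insert_iff, mem_singleton_iff, not_or] at hcd
      exact hyI ⟨lt_of_le_of_ne hcy (Ne.symm hcd.1), lt_of_le_of_ne hyd hcd.2⟩
  have hsub : Ioo c d ⊆ Ioc 0 1 := fun y hy => ⟨hc.trans_lt hy.1, hy.2.le.trans hd⟩
  rw [profit, intervalIntegral.integral_congr_ae hae, intervalIntegral.integral_of_le zero_le_one,
    MeasureTheory.setIntegral_indicator measurableSet_Ioo, inter_eq_right.2 hsub]
  simp [hcd]

end Profit

theorem profit_move_into_gap_general {n : ℕ} [NeZero n] (x : Fin n → ℝ)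
    (hx0 : x 0 = 0) (hmono : Monotone x) (hx1 : ∀ j, x j ≤ 1)
    (k l : Fin n) (hlk : l ≠ k) (hlk' : l ≠ k - 1)
    (x' : ℝ) (hx'l : x l < x') (hx'r : x' < nextVal x l) :
    profit k (Function.update x k x') = gap x l / 2 := by
  have ha : 0 ≤ x l := hx0 ▸ hmono (Fin.zero_le l)
  have hb : nextVal x l ≤ 1 := nextVal_le_one hx0 hx1 l
  have hmem : ∀ j, x j ∈ Icc 0 1 := fun j => ⟨hx0 ▸ hmono (Fin.zero_le j), hx1 j⟩
  have hout : ∀ j, x j ∉ Ioo (x l) (nextVal x l) := fun j hj =>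
    (le_or_nextVal_le hmono l j).elim hj.1.not_ge hj.2.not_ge
  have hl1k : l + 1 ≠ k := fun h => hlk' (eq_sub_of_add_eq h)
  have hgap : gap x l / 2 = (x' + nextVal x l) / 2 - (x l + x') / 2 := by
    rw [gap, ← nextVal]; ring
  rw [hgap]
  apply profit_eq_of_rho_eq_indicator (by linarith) (by linarith) (by linarith)
  · intro y hy
    refine rho_eq_one_of_forall_lt fun i hi => ?_
    rw [Function.update_self, Function.update_of_ne hi]
    exact circleDist_lt_of_mem_Ioo_midpoints ha hx'l hx'r hb hy (hmem i) (hout i)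
  · intro y hy hyc
    rcases circleDist_left_lt_or_right_lt ha hx'l hx'r hb hy hyc with h | h
    · refine rho_eq_zero_of_lt (i := l) ?_
      rwa [Function.update_self, Function.update_of_ne hlk]
    · refine rho_eq_zero_of_lt (i := l + 1) ?_
      rwa [Function.update_self, Function.update_of_ne hl1k, circleDist_add_one_eq_nextVal hx0 l hy]

theorem profit_move_into_gap {n : ℕ} [NeZero n] (hn : 2 ≤ n) (x : Fin n → ℝ)
    (hx0 : x 0 = 0) (hmono : Monotone x) (hx1 : ∀ j, x j ≤ 1)
    (k l : Fin n) (hlk : l ≠ k) (hlk' : l ≠ k - 1)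
    (x' : ℝ) (hx'l : x l < x') (hx'r : x' < nextVal x l) :
    profit k (Function.update x k x') = gap x l / 2 :=
  profit_move_into_gap_general x hx0 hmono hx1 k l hlk hlk' x' hx'l hx'r
end
end

section
/- Let x = (x_1,…,x_n) with 0 = x_1 ≤ x_2 ≤ … ≤ x_n (n ≥ 3) be a location of vendors on the circle of circumference 1, with cyclic intervals I_j = [x_j, x_{j+1}] and |Ī| = max_{1≤l≤n} |I_l|. If |I_k| + |I_{k+1}| ≥ |Ī| for all 1 ≤ k ≤ n, then f_k(x) ≥ |Ī|/2 for every vendor k. -/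
noncomputable section

open scoped Classical

/-!
Since all gaps are nonnegative and sum to `1`, the gap condition forbids two consecutive empty
gaps. Hence vendor `k` either stands alone, between the nonempty gaps `I_{k-1}` and `I_k`, or
shares its location with exactly one neighbour across an empty gap `I_j`, between the nonempty
gaps `I_{j-1}` and `I_{j+1}`. In both cases every customer within half of the left gap before
that location, or half of the right gap after it, is nearest exactly to the vendors there. So
`f_k ≥ (|I_left| + |I_right|) / 2` in the first case, which is `≥ |Ī| / 2` by the gap condition
at `k - 1`, and `f_k ≥ (|I_{j-1}| + |I_{j+1}|) / 4` in the second, where the gap condition on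
both sides of the empty gap gives `|I_{j-1}|, |I_{j+1}| ≥ |Ī|`.
-/

open Set

lemma abs_sub_round_add_intCast (t : ℝ) (z : ℤ) : |t + z - round (t + z)| = |t - round t| := by
  rw [round_add_intCast]; push_cast; ring_nf

lemma abs_sub_round_le_abs (t : ℝ) : |t - round t| ≤ |t| := by
  simpa using round_le t 0

lemma min_le_abs_sub_round {u : ℝ} (h0 : 0 ≤ u) (h1 : u ≤ 1) : min u (1 - u) ≤ |u - round u| := by
  rcases le_or_gt (round u) 0 with h | h
  · have : (round u : ℝ) ≤ 0 := by exact_mod_cast h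
    exact (min_le_left _ _).trans (by rw [abs_of_nonneg (by linarith)]; linarith)
  · have : (1 : ℝ) ≤ round u := by exact_mod_cast h
    exact (min_le_right _ _).trans (by rw [abs_of_nonpos (by linarith)]; linarith)

lemma circleDist_eq_abs_sub_round {x y : ℝ} (h : |x - y| ≤ 1) :
    circleDist x y = |x - y - round (x - y)| := by
  unfold circleDist
  generalize x - y = d at h ⊢
  have hr : |(round d : ℝ)| < 2 := by
    calc |(round d : ℝ)| = |d - (d - round d)| := by ring_nf
      _ ≤ |d| + |d - round d| := abs_sub _ _
      _ < 2 := by linarith [abs_sub_round d]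
  have hr' : round d = -1 ∨ round d = 0 ∨ round d = 1 := by
    have : |round d| < 2 := by exact_mod_cast hr
    rw [abs_lt] at this; omega
  apply le_antisymm
  · rcases hr' with hr' | hr' | hr' <;> simp [hr', sub_eq_add_neg]
  · refine le_min ?_ (le_min ?_ ?_)
    · simpa using round_le d (-1)
    · simpa using round_le d 0
    · simpa using round_le d 1

lemma abs_lt_min_of_mem_arc {a b s t : ℝ} (ha : 0 < a) (hb : 0 < b)
    (hs : s ∈ Ioo (-(a / 2)) (b / 2)) (ht : t ∈ Icc b (1 - a)) :
    |s| < min (t - s) (1 - (t - s)) := by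
  obtain ⟨hs1, hs2⟩ := hs
  obtain ⟨ht1, ht2⟩ := ht
  rcases abs_cases s with ⟨h, _⟩ | ⟨h, _⟩ <;> rw [h] <;> exact lt_min (by linarith) (by linarith)

section Vendors

variable {n : ℕ} {ξ : Fin n → ℝ}

lemma circleDist_fract_right {x y : ℝ} (hx : x ∈ Icc (0 : ℝ) 1) (hy : y ∈ Icc (0 : ℝ) 1) :
    circleDist x (Int.fract y) = circleDist x y := by
  have hy' : Int.fract y ∈ Icc (0 : ℝ) 1 := ⟨Int.fract_nonneg y, (Int.fract_lt_one y).le⟩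
  rw [circleDist_eq_abs_sub_round (Real.dist_le_of_mem_Icc_01 hx hy'),
    circleDist_eq_abs_sub_round (Real.dist_le_of_mem_Icc_01 hx hy), Int.fract,
    sub_sub_eq_add_sub, add_sub_right_comm, abs_sub_round_add_intCast]

lemma rho_fract (hξ : ∀ i, ξ i ∈ Icc (0 : ℝ) 1) (k : Fin n) {y : ℝ} (hy : y ∈ Icc (0 : ℝ) 1) :
    rho ξ k (Int.fract y) = rho ξ k y := by
  have hnear : nearest ξ (Int.fract y) = nearest ξ y := by
    ext j
    simp only [nearest, Finset.mem_filter, circleDist_fract_right (hξ _) hy]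
  rw [rho, rho, hnear]

lemma measurable_rho (ξ : Fin n → ℝ) (k : Fin n) : Measurable (rho ξ k) := by
  have hmem : ∀ j, MeasurableSet {y | ∀ i, circleDist (ξ j) y ≤ circleDist (ξ i) y} := by
    intro j
    simp only [Set.ofPred_forall]
    exact MeasurableSet.iInter fun i => measurableSet_le (by unfold circleDist; fun_prop)
      (by unfold circleDist; fun_prop)
  unfold rho nearest
  simp only [Finset.mem_filter, Finset.mem_univ, true_and, Finset.card_filter]
  push_cast
  refine Measurable.ite (hmem k) (Measurable.const_div ?_ _) measurable_const
  exact Finset.measurable_sum _ fun j _ => Measurable.ite (hmem j) measurable_const measurable_const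

lemma rho_nonneg (ξ : Fin n → ℝ) (k : Fin n) (y : ℝ) : 0 ≤ rho ξ k y := by
  unfold rho; split <;> positivity

lemma rho_le_one (ξ : Fin n → ℝ) (k : Fin n) (y : ℝ) : rho ξ k y ≤ 1 := by
  unfold rho
  split_ifs with h
  · have : (1 : ℝ) ≤ (nearest ξ y).card := by exact_mod_cast Finset.card_pos.2 ⟨k, h⟩
    exact div_le_one_of_le₀ this (by positivity)
  · exact zero_le_one

/- `rho ξ k` is not `1`-periodic (`circleDist` is the distance on the circle only for
`|x - y| ≤ 1`), but `rho ξ k ∘ Int.fract` is and agrees with it on `[0, 1]`: integrating the latter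
over the period `[c, c + 1]` lets the arc `(c, c + L)` wrap around `0`. -/
lemma le_profit_of_le_rho_fract (hξ : ∀ i, ξ i ∈ Icc (0 : ℝ) 1) (k : Fin n) {c L : ℝ} {m : ℕ}
    (hL0 : 0 ≤ L) (hL1 : L ≤ 1) (h : ∀ y ∈ Ioo c (c + L), 1 / (m : ℝ) ≤ rho ξ k (Int.fract y)) :
    L / m ≤ profit k ξ := by
  set g : ℝ → ℝ := fun y => rho ξ k (Int.fract y)
  have hg : Function.Periodic g 1 := (Int.fract_periodic ℝ).comp (rho ξ k)
  have hgi : ∀ u v, IntervalIntegrable g MeasureTheory.volume u v := fun u v =>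
    (intervalIntegrable_const (c := (1 : ℝ))).mono_fun
      ((measurable_rho ξ k).comp measurable_fract).aestronglyMeasurable
      (Filter.Eventually.of_forall fun y => by
        simp only [Real.norm_eq_abs, abs_one, abs_of_nonneg (rho_nonneg ξ k _), g,
          rho_le_one])
  calc L / m = ∫ _ in c..c + L, 1 / (m : ℝ) := by
        rw [intervalIntegral.integral_const, smul_eq_mul, add_sub_cancel_left, mul_one_div]
    _ ≤ ∫ y in c..c + L, g y :=
      intervalIntegral.integral_mono_on_of_le_Ioo (by linarith) intervalIntegrable_const
        (hgi _ _) h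
    _ ≤ ∫ y in c..c + 1, g y :=
      intervalIntegral.integral_mono_interval le_rfl (by linarith) (by linarith)
        (Filter.Eventually.of_forall fun y => rho_nonneg ξ k _) (hgi _ _)
    _ = ∫ y in (0 : ℝ)..0 + 1, g y := hg.intervalIntegral_add_eq c 0
    _ = profit k ξ := by
      rw [zero_add, profit]
      refine intervalIntegral.integral_congr fun y hy => rho_fract hξ k ?_
      rwa [uIcc_of_le zero_le_one] at hy

variable {p : Fin n} {C : Finset (Fin n)} {a b : ℝ}

/- A vendor at offset `t ∈ [b, 1 - a]` from `p` lies at least `b` after and `a` before it on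
the circle. -/
lemma nearest_eq_of_arc (hξ : ∀ i, ξ i ∈ Icc (0 : ℝ) 1) (hpC : p ∈ C) (ha : 0 < a) (hb : 0 < b)
    (hC : ∀ i ∈ C, ∃ z : ℤ, ξ i = ξ p + z)
    (hCc : ∀ i ∉ C, ∃ t ∈ Icc b (1 - a), ∃ z : ℤ, ξ i = ξ p + t + z)
    {y s : ℝ} {w : ℤ} (hy : y ∈ Icc (0 : ℝ) 1) (hs : s ∈ Ioo (-(a / 2)) (b / 2))
    (hys : y = ξ p + s + w) :
    nearest ξ y = C := by
  have hdist : ∀ i, circleDist (ξ i) y = |ξ i - y - round (ξ i - y)| := fun i =>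
    circleDist_eq_abs_sub_round (Real.dist_le_of_mem_Icc_01 (hξ i) hy)
  set δ := |-s - round (-s)|
  have hdist_mem : ∀ i ∈ C, circleDist (ξ i) y = δ := by
    intro i hi
    obtain ⟨z, hz⟩ := hC i hi
    rw [hdist, show ξ i - y = -s + ((z - w : ℤ) : ℝ) by push_cast; linarith,
      abs_sub_round_add_intCast]
  have hdist_not_mem : ∀ i ∉ C, δ < circleDist (ξ i) y := by
    intro i hi
    obtain ⟨t, ht, z, hz⟩ := hCc i hi
    rw [hdist, show ξ i - y = t - s + ((z - w : ℤ) : ℝ) by push_cast; linarith,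
      abs_sub_round_add_intCast]
    calc δ ≤ |s| := by simpa using abs_sub_round_le_abs (-s)
      _ < min (t - s) (1 - (t - s)) := abs_lt_min_of_mem_arc ha hb hs ht
      _ ≤ _ := min_le_abs_sub_round (by linarith [hs.2, ht.1]) (by linarith [hs.1, ht.2])
  ext i
  simp only [nearest, Finset.mem_filter, Finset.mem_univ, true_and]
  refine ⟨fun h => ?_, fun hi j => ?_⟩
  · by_contra hi
    exact (h p).not_gt (hdist_mem p hpC ▸ hdist_not_mem i hi)
  · rw [hdist_mem i hi]
    by_cases hj : j ∈ C
    · rw [hdist_mem j hj]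
    · exact (hdist_not_mem j hj).le

lemma le_profit_of_arc (hξ : ∀ i, ξ i ∈ Icc (0 : ℝ) 1) (hpC : p ∈ C) {k : Fin n} (hkC : k ∈ C)
    (ha : 0 < a) (hb : 0 < b) (hab : a + b ≤ 2)
    (hC : ∀ i ∈ C, ∃ z : ℤ, ξ i = ξ p + z)
    (hCc : ∀ i ∉ C, ∃ t ∈ Icc b (1 - a), ∃ z : ℤ, ξ i = ξ p + t + z) :
    (a + b) / 2 / C.card ≤ profit k ξ := by
  refine le_profit_of_le_rho_fract hξ k (c := ξ p - a / 2) (by linarith) (by linarith)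
    fun y hy => ?_
  have hy' : Int.fract y ∈ Icc (0 : ℝ) 1 := ⟨Int.fract_nonneg y, (Int.fract_lt_one y).le⟩
  have hnear : nearest ξ (Int.fract y) = C :=
    nearest_eq_of_arc hξ hpC ha hb hC hCc (s := y - ξ p) (w := -⌊y⌋) hy'
      ⟨by linarith [hy.1], by linarith [hy.2]⟩ (by rw [Int.fract]; push_cast; ring)
  rw [rho, hnear, if_pos hkC]

end Vendors

section Gaps

open Fin.NatCast

variable {n : ℕ} [NeZero n] (x : Fin n → ℝ)

def arcLength (j : Fin n) (q : ℕ) : ℝ := ∑ m ∈ Finset.range q, gap x (j + (m : Fin n))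

lemma arcLength_succ (j : Fin n) (q : ℕ) :
    arcLength x j (q + 1) = arcLength x j q + gap x (j + (q : Fin n)) :=
  Finset.sum_range_succ _ _

lemma exists_int_eq_add_arcLength (j : Fin n) (q : ℕ) :
    ∃ z : ℤ, x (j + (q : Fin n)) = x j + arcLength x j q + z := by
  induction q with
  | zero => exact ⟨0, by simp [arcLength]⟩
  | succ q ih =>
    obtain ⟨z, hz⟩ := ih
    refine ⟨z - if ((j + q : Fin n) : ℕ) + 1 = n then 1 else 0, ?_⟩
    have hstep : x (j + q + 1) = x (j + (q : Fin n)) + gap x (j + (q : Fin n)) -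
        (if ((j + q : Fin n) : ℕ) + 1 = n then 1 else 0) := by
      unfold gap; ring
    rw [Nat.cast_succ, ← add_assoc, hstep, hz, arcLength_succ]
    push_cast
    ring

lemma sum_gap : ∑ i, gap x i = 1 := by
  obtain ⟨m, rfl⟩ : ∃ m, n = m + 1 := ⟨n - 1, (Nat.succ_pred_eq_of_ne_zero (NeZero.ne n)).symm⟩
  have hshift : ∑ i, x (i + 1) = ∑ i, x i := Equiv.sum_comp (Equiv.addRight 1) x
  simp only [gap, Finset.sum_sub_distrib, Finset.sum_add_distrib, hshift, add_sub_cancel_right]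
  rw [Fin.sum_univ_eq_sum_range (fun i => if i + 1 = m + 1 then (1 : ℝ) else 0),
    Finset.sum_range_succ, if_pos rfl,
    Finset.sum_eq_zero fun i hi => if_neg (by simp at hi; omega), zero_add]

lemma arcLength_sub_val (i j : Fin n) :
    ∃ z : ℤ, x i = x j + arcLength x j (i - j).val + z := by
  simpa using exists_int_eq_add_arcLength x j (i - j).val

lemma arcLength_self (j : Fin n) : arcLength x j n = 1 := by
  rw [arcLength, ← Fin.sum_univ_eq_sum_range (fun m => gap x (j + (m : Fin n))) n]
  simp only [Fin.cast_val_eq_self]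
  exact (Equiv.sum_comp (Equiv.addLeft j) (gap x)).trans (sum_gap x)

lemma gap_le_maxGap (j : Fin n) : gap x j ≤ maxGap x :=
  le_ciSup (Set.finite_range _).bddAbove j

lemma maxGap_pos : 0 < maxGap x := by
  by_contra! h
  have : ∑ i, gap x i ≤ 0 := Finset.sum_nonpos fun i _ => (gap_le_maxGap x i).trans h
  linarith [sum_gap x]

variable {x}

lemma gap_nonneg (hx0 : x 0 = 0) (hmono : Monotone x) (hx1 : ∀ i, x i ≤ 1) (i : Fin n) :
    0 ≤ gap x i := by
  unfold gap
  split_ifs with h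
  · have : i + 1 = 0 := Fin.ext (by simp [Fin.val_add, h])
    rw [this, hx0]
    linarith [hx1 i]
  · have : i ≤ i + 1 := by
      rw [Fin.le_def, Fin.val_add_one_of_lt' (by omega)]
      omega
    linarith [hmono this]

lemma gap_le_one (hgap : ∀ i, 0 ≤ gap x i) (j : Fin n) : gap x j ≤ 1 :=
  sum_gap x ▸ Finset.single_le_sum (f := gap x) (fun _ _ => hgap _) (Finset.mem_univ j)

lemma gap_le_arcLength (hgap : ∀ i, 0 ≤ gap x i) (j : Fin n) {m q : ℕ} (hm : m < q) :
    gap x (j + (m : Fin n)) ≤ arcLength x j q :=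
  Finset.single_le_sum (f := fun m : ℕ => gap x (j + (m : Fin n))) (fun _ _ => hgap _)
    (Finset.mem_range.2 hm)

lemma arcLength_le_one_sub_gap (hgap : ∀ i, 0 ≤ gap x i) (j : Fin n) {q : ℕ} (hq : q < n) :
    arcLength x j q ≤ 1 - gap x (j - 1) := by
  have hlast : ((n - 1 : ℕ) : Fin n) = -1 := by
    rw [eq_neg_iff_add_eq_zero, ← Nat.cast_add_one, Nat.sub_add_cancel NeZero.one_le,
      Fin.natCast_self]
  have htotal := arcLength_succ x j (n - 1)
  rw [Nat.sub_add_cancel NeZero.one_le, arcLength_self, hlast, ← sub_eq_add_neg] at htotal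
  calc arcLength x j q ≤ arcLength x j (n - 1) :=
        Finset.sum_le_sum_of_subset_of_nonneg (Finset.range_subset_range.2 (by omega))
          fun _ _ _ => hgap _
    _ = 1 - gap x (j - 1) := by linarith

end Gaps

section Sorted

open Fin.NatCast

variable {n : ℕ} [NeZero n] {x : Fin n → ℝ}

lemma le_profit_of_gap_pos (hx : ∀ i, x i ∈ Icc (0 : ℝ) 1) (hgap : ∀ i, 0 ≤ gap x i)
    {k : Fin n} (hl : 0 < gap x (k - 1)) (hr : 0 < gap x k) :
    (gap x (k - 1) + gap x k) / 2 ≤ profit k x := by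
  have h := le_profit_of_arc hx (Finset.mem_singleton_self k) (Finset.mem_singleton_self k) hl hr
    (by linarith [gap_le_one hgap (k - 1), gap_le_one hgap k]) ?_ ?_
  · simpa using h
  · intro i hi
    rw [Finset.mem_singleton.1 hi]
    exact ⟨0, by simp⟩
  · intro i hi
    have hq : (i - k).val ≠ 0 := fun h => hi (Finset.mem_singleton.2 (sub_eq_zero.1 (Fin.ext h)))
    obtain ⟨z, hz⟩ := arcLength_sub_val x i k
    refine ⟨arcLength x k (i - k).val, ⟨?_, arcLength_le_one_sub_gap hgap k (i - k).isLt⟩, z, hz⟩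
    simpa using gap_le_arcLength hgap k (Nat.pos_of_ne_zero hq)

lemma le_profit_of_gap_eq_zero (hx : ∀ i, x i ∈ Icc (0 : ℝ) 1) (hgap : ∀ i, 0 ≤ gap x i)
    {j k : Fin n} (hj : gap x j = 0) (hk : k = j ∨ k = j + 1)
    (hl : 0 < gap x (j - 1)) (hr : 0 < gap x (j + 1)) :
    (gap x (j - 1) + gap x (j + 1)) / 4 ≤ profit k x := by
  set C : Finset (Fin n) := {j, j + 1}
  have h := le_profit_of_arc hx (p := j) (C := C) (k := k) (by simp [C])
    (by rcases hk with hk | hk <;> simp [C, hk]) hl hr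
    (by linarith [gap_le_one hgap (j - 1), gap_le_one hgap (j + 1)]) ?_ ?_
  · have hC : (0 : ℝ) < C.card := by exact_mod_cast Finset.card_pos.2 ⟨j, by simp [C]⟩
    calc (gap x (j - 1) + gap x (j + 1)) / 4
        = (gap x (j - 1) + gap x (j + 1)) / 2 / 2 := by ring
      _ ≤ (gap x (j - 1) + gap x (j + 1)) / 2 / C.card :=
        div_le_div_of_nonneg_left (by linarith) hC (by exact_mod_cast Finset.card_le_two)
      _ ≤ profit k x := h
  · intro i hi
    rcases Finset.mem_insert.1 hi with rfl | hi
    · exact ⟨0, by simp⟩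
    · obtain ⟨z, hz⟩ := exists_int_eq_add_arcLength x j 1
      rw [Finset.mem_singleton.1 hi]
      refine ⟨z, ?_⟩
      simpa [arcLength, hj] using hz
  · intro i hi
    have hq0 : (i - j).val ≠ 0 := fun h => hi (by simp [C, sub_eq_zero.1 (Fin.ext h)])
    have hq1 : (i - j).val ≠ 1 := fun h => hi (by
      have : ((i - j).val : Fin n) = 1 := by rw [h, Nat.cast_one]
      simp [C, ← this])
    obtain ⟨z, hz⟩ := arcLength_sub_val x i j
    refine ⟨arcLength x j (i - j).val, ⟨?_, arcLength_le_one_sub_gap hgap j (i - j).isLt⟩, z, hz⟩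
    simpa using gap_le_arcLength hgap j (m := 1) (by omega)

end Sorted

theorem profit_lower_bound_of_gap_condition_general {n : ℕ} [NeZero n]
    (x : Fin n → ℝ) (hx0 : x 0 = 0) (hmono : Monotone x) (hx1 : ∀ j, x j ≤ 1)
    (hcond : ∀ k : Fin n, maxGap x ≤ gap x k + gap x (k + 1)) :
    ∀ k : Fin n, maxGap x / 2 ≤ profit k x := by
  intro k
  have hx : ∀ i, x i ∈ Icc (0 : ℝ) 1 := fun i => ⟨hx0 ▸ hmono (Fin.zero_le i), hx1 i⟩
  have hgap := gap_nonneg hx0 hmono hx1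
  have hM := maxGap_pos x
  have hcond_pred : ∀ j, maxGap x ≤ gap x (j - 1) + gap x j := fun j => by
    simpa using hcond (j - 1)
  by_cases hempty : ∃ j, gap x j = 0 ∧ (k = j ∨ k = j + 1)
  · obtain ⟨j, hj, hk⟩ := hempty
    have hl := hcond_pred j
    have hr := hcond j
    rw [hj] at hl hr
    have := le_profit_of_gap_eq_zero hx hgap hj hk (by linarith) (by linarith)
    linarith
  · have hl := (hgap (k - 1)).lt_of_ne' fun h =>
      hempty ⟨k - 1, h, Or.inr (sub_add_cancel k 1).symm⟩
    have hr := (hgap k).lt_of_ne' fun h => hempty ⟨k, h, Or.inl rfl⟩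
    linarith [le_profit_of_gap_pos hx hgap hl hr, hcond_pred k]

theorem profit_lower_bound_of_gap_condition {n : ℕ} [NeZero n] (hn : 3 ≤ n)
    (x : Fin n → ℝ) (hx0 : x 0 = 0) (hmono : Monotone x) (hx1 : ∀ j, x j ≤ 1)
    (hcond : ∀ k : Fin n, maxGap x ≤ gap x k + gap x (k + 1)) :
    ∀ k : Fin n, maxGap x / 2 ≤ profit k x :=
  profit_lower_bound_of_gap_condition_general x hx0 hmono hx1 hcond
end
end
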